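/- Let W : ℕ → A be a recurrent infinite word over a finite alphabet A such that for some natural number N and constant K one has T_W(n) = n + K for all n ≥ N. Then W is uniformly recurrent. -/

import Mathlib

/-- The factor of the infinite word `W` of length `n` occurring at position `i`. -/
def factorAt {A : Type*} (W : ℕ → A) (i n : ℕ) : List A :=
  (List.range n).map (fun j => W (i + j))

/-- `u` occurs in `W` at position `i`. -/
def occursAt {A : Type*} (W : ℕ → A) (u : List A) (i : ℕ) : Prop :=
  u = factorAt W i u.length

/-- `u` is a factor of the infinite word `W`. -/
def IsFactor {A : Type*} (W : ℕ → A) (u : List A) : Prop :=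
  ∃ i : ℕ, occursAt W u i

/-- `W` is recurrent: every factor occurs infinitely often. -/
def Recurrent {A : Type*} (W : ℕ → A) : Prop :=
  ∀ u : List A, IsFactor W u → {i : ℕ | occursAt W u i}.Infinite

/-- The complexity function: the number of distinct factors of `W` of length `n`. -/
noncomputable def complexity {A : Type*} (W : ℕ → A) (n : ℕ) : ℕ :=
  Set.ncard {u : List A | u.length = n ∧ IsFactor W u}

/-- `W` is uniformly recurrent: every factor occurs in every sufficiently long
factor of `W`. -/
def UniformlyRecurrent {A : Type*} (W : ℕ → A) : Prop :=
  ∀ v : List A, IsFactor W v → ∃ N : ℕ,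
    ∀ u : List A, IsFactor W u → u.length = N → v <:+: u

/-!
Complexity `n + K` rules out eventual periodicity, and since `T(n + 1) - T(n) = 1` for `n ≥ N`,
each length `n ≥ N` carries at most one right special factor. In a recurrent word that is not
eventually periodic, every factor `v` lies in arbitrarily long right special factors: otherwise
the letters following a recurring factor containing `v` are forced forever, and two occurrences
of it make the word periodic. Take such a right special factor `z` with `|z| ≥ N`; it is the only
right special factor of its length, so a factor of length `≥ |z|` avoiding `v` has no right
special suffix of length `|z|` and is itself not right special. If arbitrarily long factors
avoided `v`, a prefix shared by infinitely many of them recurs, and the same forcing argument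
again makes the word eventually periodic.
-/

section Factors

variable {A : Type*} (W : ℕ → A)

@[simp] lemma length_factorAt (i n : ℕ) : (factorAt W i n).length = n := by
  simp [factorAt]

lemma factorAt_succ (i n : ℕ) :
    factorAt W i (n + 1) = factorAt W i n ++ [W (i + n)] := by
  simp [factorAt, List.range_succ]

lemma take_factorAt (i : ℕ) {m n : ℕ} (hmn : m ≤ n) :
    (factorAt W i n).take m = factorAt W i m := by
  apply List.ext_getElem (by simp [hmn])
  intro k _ _
  simp [factorAt]

lemma drop_factorAt (i m n : ℕ) :
    (factorAt W i n).drop m = factorAt W (i + m) (n - m) := by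
  apply List.ext_getElem (by simp)
  intro k _ _
  simp [factorAt, Nat.add_assoc]

lemma factorAt_prefix (i : ℕ) {m n : ℕ} (hmn : m ≤ n) : factorAt W i m <+: factorAt W i n :=
  take_factorAt W i hmn ▸ List.take_prefix m _

lemma isFactor_factorAt (i n : ℕ) : IsFactor W (factorAt W i n) :=
  ⟨i, by rw [occursAt, length_factorAt]⟩

variable {W}

lemma IsFactor.of_suffix {u u' : List A} (hf : IsFactor W u') (hu : u <:+ u') : IsFactor W u := by
  obtain ⟨s, rfl⟩ := hu
  obtain ⟨i, hi⟩ := hf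
  have h := congrArg (List.drop s.length) hi
  simp only [List.drop_left, drop_factorAt, List.length_append, Nat.add_sub_cancel_left] at h
  exact ⟨i + s.length, h⟩

lemma Recurrent.exists_lt_occursAt (hrec : Recurrent W) {u : List A} (hu : IsFactor W u) :
    ∃ i j, i < j ∧ occursAt W u i ∧ occursAt W u j := by
  obtain ⟨i, hi⟩ := (hrec u hu).nonempty
  obtain ⟨j, hj, hij⟩ := (hrec u hu).exists_gt i
  exact ⟨i, j, hij, hi, hj⟩

variable (W)

lemma finite_setOf_isFactor [Finite A] (n : ℕ) :
    {u : List A | u.length = n ∧ IsFactor W u}.Finite :=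
  (List.finite_length_eq A n).subset fun _ hu => hu.1

end Factors

section Periodicity

variable {A : Type*} (W : ℕ → A)

def EventuallyPeriodic : Prop :=
  ∃ i j, i < j ∧ ∀ t, W (i + t) = W (j + t)

variable {W}

lemma EventuallyPeriodic.of_factorAt_eq {i j : ℕ} (hij : i < j)
    (h : ∀ n, factorAt W i n = factorAt W j n) : EventuallyPeriodic W :=
  ⟨i, j, hij, fun t => by simpa [factorAt_succ, h t] using h (t + 1)⟩

lemma complexity_le_of_periodic {i j : ℕ} (hij : i < j) (hper : ∀ t, W (i + t) = W (j + t))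
    (n : ℕ) : complexity W n ≤ j := by
  have hshift : ∀ k, ∃ k' < j, factorAt W k' n = factorAt W k n := by
    intro k
    induction k using Nat.strong_induction_on with
    | _ k ih =>
      by_cases hk : k < j
      · exact ⟨k, hk, rfl⟩
      obtain ⟨k', hk', hk'eq⟩ := ih (k - (j - i)) (by omega)
      refine ⟨k', hk', hk'eq.trans (List.ext_getElem (by simp) fun t _ _ => ?_)⟩
      simpa [factorAt, show i + (k - j + t) = k - (j - i) + t by omega,
        show j + (k - j + t) = k + t by omega] using hper (k - j + t)
  have hsub : {u : List A | u.length = n ∧ IsFactor W u} ⊆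
      (fun k => factorAt W k n) '' Set.Iio j := by
    rintro u ⟨hlen, k, hk⟩
    obtain ⟨k', hk', hk'eq⟩ := hshift k
    exact ⟨k', hk', hk'eq.trans (hlen ▸ hk.symm)⟩
  calc complexity W n ≤ ((fun k => factorAt W k n) '' Set.Iio j).ncard :=
        Set.ncard_le_ncard hsub ((Set.finite_Iio j).image _)
    _ ≤ j := (Set.ncard_image_le (Set.finite_Iio j)).trans (Set.ncard_Iio_nat j).le

lemma not_eventuallyPeriodic_of_complexity_eq {N K : ℕ}
    (h : ∀ n, N ≤ n → complexity W n = n + K) : ¬ EventuallyPeriodic W := by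
  rintro ⟨i, j, hij, hper⟩
  have := complexity_le_of_periodic hij hper (N + j + 1)
  rw [h _ (by omega)] at this
  omega

end Periodicity

section RightSpecial

variable {A : Type*} (W : ℕ → A)

def RightSpecial (u : List A) : Prop :=
  ∃ a b, a ≠ b ∧ IsFactor W (u ++ [a]) ∧ IsFactor W (u ++ [b])

variable {W}

lemma RightSpecial.of_suffix {u s : List A} (hu : RightSpecial W u) (hs : s <:+ u) :
    RightSpecial W s := by
  obtain ⟨a, b, hab, ha, hb⟩ := hu
  exact ⟨a, b, hab, ha.of_suffix (List.suffix_append_self_iff.mpr hs),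
    hb.of_suffix (List.suffix_append_self_iff.mpr hs)⟩

lemma complexity_add_two_le [Finite A] {y z : List A} (hy : RightSpecial W y)
    (hz : RightSpecial W z) (hlen : y.length = z.length) (hyz : y ≠ z) :
    complexity W z.length + 2 ≤ complexity W (z.length + 1) := by
  obtain ⟨a, a', haa', hya, hya'⟩ := hy
  obtain ⟨b, b', hbb', hzb, hzb'⟩ := hz
  set n := z.length
  set S := {u : List A | u.length = n ∧ IsFactor W u}
  set S' := {u : List A | u.length = n + 1 ∧ IsFactor W u}
  have hpair : ({y ++ [a], z ++ [b]} : Set (List A)) ⊆ S' := by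
    rintro u (rfl | rfl)
    · exact ⟨by simp [hlen], hya⟩
    · exact ⟨by simp [n], hzb⟩
  -- every factor of length `n` still has an extension once `y ++ [a]` and `z ++ [b]` are removed
  have hext : S ⊆ List.dropLast '' (S' \ {y ++ [a], z ++ [b]}) := by
    rintro u ⟨hlen', i, hi⟩
    obtain ⟨c, hc, hcy, hcz⟩ : ∃ c, IsFactor W (u ++ [c]) ∧
        u ++ [c] ≠ y ++ [a] ∧ u ++ [c] ≠ z ++ [b] := by
      by_cases huy : u = y
      · subst huy; exact ⟨a', hya', by simpa using haa'.symm, by simp [hyz]⟩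
      by_cases huz : u = z
      · subst huz; exact ⟨b', hzb', by simp [huy], by simpa using hbb'.symm⟩
      refine ⟨W (i + n), ?_, by simp [huy], by simp [huz]⟩
      rw [hi, hlen', ← factorAt_succ]
      exact isFactor_factorAt W i (n + 1)
    exact ⟨u ++ [c], ⟨⟨by simp [hlen'], hc⟩, by simp [hcy, hcz]⟩, List.dropLast_concat⟩
  have hS'fin : S'.Finite := finite_setOf_isFactor W (n + 1)
  have hpair_card : ({y ++ [a], z ++ [b]} : Set (List A)).ncard = 2 :=
    Set.ncard_pair (by simp [hyz])
  have hpair_le := Set.ncard_le_ncard hpair hS'fin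
  calc S.ncard + 2 ≤ (S' \ {y ++ [a], z ++ [b]}).ncard + 2 := by
        grw [Set.ncard_le_ncard hext (hS'fin.sdiff.image _), Set.ncard_image_le hS'fin.sdiff]
    _ = S'.ncard := by rw [Set.ncard_sdiff hpair]; omega

end RightSpecial

section UniformRecurrence

variable {A : Type*} {W : ℕ → A}

lemma factorAt_eq_of_not_rightSpecial {i j t₀ : ℕ} (h₀ : factorAt W i t₀ = factorAt W j t₀)
    (T : ℕ) (hT : ∀ t, t₀ ≤ t → t < T → ¬ RightSpecial W (factorAt W j t)) :
    factorAt W i T = factorAt W j T := by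
  induction T with
  | zero => rfl
  | succ T ih =>
    by_cases hT₀ : T + 1 ≤ t₀
    · rw [← take_factorAt W i hT₀, ← take_factorAt W j hT₀, h₀]
    have ih := ih fun t h₁ h₂ => hT t h₁ (by omega)
    have hW : W (i + T) = W (j + T) := by
      by_contra hne
      refine hT T (by omega) T.lt_succ_self ⟨_, _, hne, ?_, ?_⟩
      · rw [← ih, ← factorAt_succ]; exact isFactor_factorAt W i (T + 1)
      · rw [← factorAt_succ]; exact isFactor_factorAt W j (T + 1)
    rw [factorAt_succ, factorAt_succ, ih, hW]

lemma exists_rightSpecial_infix (hrec : Recurrent W) (hper : ¬ EventuallyPeriodic W)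
    {v : List A} (hv : IsFactor W v) (n : ℕ) :
    ∃ u, RightSpecial W u ∧ v <:+: u ∧ n ≤ u.length := by
  by_contra! hshort
  obtain ⟨k, hk⟩ := hv
  obtain ⟨i, j, hij, hi, hj⟩ :=
    hrec.exists_lt_occursAt (isFactor_factorAt W k (v.length + n))
  simp only [occursAt, length_factorAt] at hi hj
  have hvk := factorAt_prefix W k (Nat.le_add_right v.length n)
  rw [← hk] at hvk
  refine hper (.of_factorAt_eq hij fun T => factorAt_eq_of_not_rightSpecial (hi.symm.trans hj) T
    fun t ht _ hrs => (hshort _ hrs ?_).not_ge (by simp at ht ⊢; omega))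
  exact (hvk.trans (hj ▸ factorAt_prefix W j ht)).isInfix

lemma not_rightSpecial_of_not_infix {v u : List A} {M : ℕ}
    (hM : ∀ y, y.length = M → RightSpecial W y → v <:+: y) (hu : M ≤ u.length)
    (hvu : ¬ v <:+: u) : ¬ RightSpecial W u := fun hrs =>
  have hsuf := List.drop_suffix (u.length - M) u
  hvu ((hM _ (by simp; omega) (hrs.of_suffix hsuf)).trans hsuf.isInfix)

lemma exists_forall_infix_factorAt [Finite A] (hrec : Recurrent W)
    (hper : ¬ EventuallyPeriodic W) {v : List A} {M : ℕ}
    (hM : ∀ y, y.length = M → RightSpecial W y → v <:+: y) :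
    ∃ L, ∀ j, v <:+: factorAt W j L := by
  by_contra! havoid
  choose g hg using havoid
  have hns : ∀ L t, M ≤ t → t ≤ L → ¬ RightSpecial W (factorAt W (g L) t) :=
    fun L t hMt htL => not_rightSpecial_of_not_infix hM (by simpa using hMt)
      fun hv => hg L (hv.trans (factorAt_prefix W (g L) htL).isInfix)
  have : Finite {u : List A | u.length = M} := (List.finite_length_eq A M).to_subtype
  obtain ⟨⟨w, hw⟩, hinf⟩ := Finite.exists_infinite_fiber
    fun L => (⟨factorAt W (g L) M, length_factorAt W _ M⟩ : {u : List A | u.length = M})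
  have hfib : {L | factorAt W (g L) M = w}.Infinite := by
    simpa [Set.infinite_coe_iff, Set.preimage] using hinf
  obtain ⟨L₀, hL₀⟩ := hfib.nonempty
  obtain ⟨i, j, hij, hi, hj⟩ := hrec.exists_lt_occursAt (hL₀ ▸ isFactor_factorAt W (g L₀) M)
  refine hper (.of_factorAt_eq hij fun T => ?_)
  obtain ⟨L, hLw, hTL⟩ := hfib.exists_gt T
  have follow : ∀ k, occursAt W w k → factorAt W k T = factorAt W (g L) T := fun k hk =>
    factorAt_eq_of_not_rightSpecial (by rw [hLw, ← hw, ← hk]) T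
      fun t ht htT => hns L t ht (by omega)
  rw [follow i hi, follow j hj]

end UniformRecurrence

/-- A recurrent word with eventual complexity `n + K` is uniformly recurrent. -/
theorem stmt19 {A : Type*} [Fintype A] (W : ℕ → A) (hrec : Recurrent W)
    (N K : ℕ) (h : ∀ n : ℕ, N ≤ n → complexity W n = n + K) :
    UniformlyRecurrent W := by
  have hper := not_eventuallyPeriodic_of_complexity_eq h
  intro v hv
  obtain ⟨z, hz, hvz, hNz⟩ := exists_rightSpecial_infix hrec hper hv N
  have hM : ∀ y, y.length = z.length → RightSpecial W y → v <:+: y := by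
    intro y hy hys
    by_contra hvy
    have := complexity_add_two_le hys hz hy (by rintro rfl; exact hvy hvz)
    rw [h _ hNz, h _ (by omega)] at this
    omega
  obtain ⟨L, hL⟩ := exists_forall_infix_factorAt hrec hper hM
  refine ⟨L, fun u ⟨i, hi⟩ hu => ?_⟩
  rw [hi, hu]
  exact hL i
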